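/- arXiv:1211.5705 — 3 statements merged into one kernel-verified Lean document; each statement's English description precedes it below -/
import Mathlib

section
/- For all real μ and all σ > 0, the average of the log-normal radial density over a shrinking disc centered at the origin vanishes: lim_{ε→0⁺} (1/(π·ε²))·∫₀^ε (1/(s·σ·√(2π)))·exp(−(ln s − μ)²/(2σ²)) ds = 0. -/
open MeasureTheory Real Filter

/-- The average of the log-normal radial density over a shrinking disc centered at the
origin vanishes:
`lim_{ε→0⁺} (1/(π ε²)) ∫₀^ε (1/(s σ √(2π))) exp(−(ln s − μ)²/(2σ²)) ds = 0`. -/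
theorem lognormal_center_density_zero (μ σ : ℝ) (hσ : 0 < σ) :
    Tendsto (fun ε : ℝ =>
        (1 / (π * ε ^ 2)) *
          ∫ s in (0 : ℝ)..ε,
            (1 / (s * σ * Real.sqrt (2 * π))) * Real.exp (-(Real.log s - μ) ^ 2 / (2 * σ ^ 2)))
      (nhdsWithin 0 (Set.Ioi 0)) (nhds 0) := by
  set F : ℝ → ℝ := fun s =>
    (1 / (s * σ * Real.sqrt (2 * π))) * Real.exp (-(Real.log s - μ) ^ 2 / (2 * σ ^ 2)) with hF
  have hsqrt : (0:ℝ) < Real.sqrt (2 * π) := Real.sqrt_pos.2 (by positivity)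
  set C : ℝ := Real.exp (9 * σ ^ 2 / 2 - 3 * μ) / (σ * Real.sqrt (2 * π)) with hC
  have hCpos : 0 < C := by positivity
  -- pointwise bound on [0, ∞): 0 ≤ F s ≤ C * s ^ 2
  have hFnn : ∀ s, 0 ≤ s → 0 ≤ F s := by
    intro s hs
    have : 0 ≤ 1 / (s * σ * Real.sqrt (2 * π)) := by positivity
    exact mul_nonneg this (Real.exp_nonneg _)
  have hFle : ∀ s, 0 ≤ s → F s ≤ C * s ^ 2 := by
    intro s hs
    rcases eq_or_lt_of_le hs with h | hs
    · simp [hF, ← h]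
    · have hexp : Real.exp (-(Real.log s - μ) ^ 2 / (2 * σ ^ 2)) ≤
        Real.exp (9 * σ ^ 2 / 2 - 3 * μ) * s ^ 3 := by
        have key : -(Real.log s - μ) ^ 2 / (2 * σ ^ 2) ≤
            9 * σ ^ 2 / 2 - 3 * μ + 3 * Real.log s := by
          rw [div_le_iff₀ (by positivity : (0:ℝ) < 2 * σ ^ 2)]
          nlinarith [sq_nonneg (Real.log s - μ + 3 * σ ^ 2), sq_nonneg σ]
        calc Real.exp (-(Real.log s - μ) ^ 2 / (2 * σ ^ 2))
            ≤ Real.exp (9 * σ ^ 2 / 2 - 3 * μ + 3 * Real.log s) := Real.exp_le_exp.2 key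
          _ = Real.exp (9 * σ ^ 2 / 2 - 3 * μ) * s ^ 3 := by
              rw [Real.exp_add]
              congr 1
              rw [show (3:ℝ) * Real.log s = (3:ℕ) * Real.log s by norm_num,
                Real.exp_nat_mul, Real.exp_log hs]
      have h1 : F s ≤ (1 / (s * σ * Real.sqrt (2 * π))) *
          (Real.exp (9 * σ ^ 2 / 2 - 3 * μ) * s ^ 3) :=
        mul_le_mul_of_nonneg_left hexp (by positivity)
      have h2 : (1 / (s * σ * Real.sqrt (2 * π))) *
          (Real.exp (9 * σ ^ 2 / 2 - 3 * μ) * s ^ 3) = C * s ^ 2 := by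
        rw [hC]; field_simp
      linarith
  -- integrability
  have hmeas : Measurable F := by
    apply Measurable.mul
    · exact (measurable_const.div ((measurable_id.mul_const σ).mul_const _))
    · exact Real.measurable_exp.comp
        ((((Real.measurable_log.sub measurable_const).pow_const 2).neg).div_const _)
  have hGint : ∀ ε : ℝ, IntervalIntegrable (fun s => C * s ^ 2) volume 0 ε :=
    fun ε => (continuous_const.mul (continuous_pow 2)).intervalIntegrable 0 ε
  have hFint : ∀ ε : ℝ, 0 < ε → IntervalIntegrable F volume 0 ε := by
    intro ε hε
    apply (hGint ε).mono_fun hmeas.aestronglyMeasurable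
    filter_upwards [ae_restrict_mem measurableSet_Ioc] with s hs
    rw [Set.uIoc_of_le hε.le] at hs
    rw [Real.norm_eq_abs, Real.norm_eq_abs, abs_of_nonneg (hFnn s hs.1.le),
      abs_of_nonneg (by positivity)]
    exact hFle s hs.1.le
  -- squeeze
  have hub : ∀ ε : ℝ, 0 < ε →
      (1 / (π * ε ^ 2)) * ∫ s in (0:ℝ)..ε, F s ≤ C / (3 * π) * ε := by
    intro ε hε
    have hint : ∫ s in (0:ℝ)..ε, F s ≤ ∫ s in (0:ℝ)..ε, C * s ^ 2 := by
      apply intervalIntegral.integral_mono_on hε.le (hFint ε hε) (hGint ε)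
      intro s hs; exact hFle s hs.1
    have hval : ∫ s in (0:ℝ)..ε, C * s ^ 2 = C * (ε ^ 3 / 3) := by
      rw [intervalIntegral.integral_const_mul, integral_pow]; norm_num
    have h1 : (0:ℝ) < 1 / (π * ε ^ 2) := by positivity
    calc (1 / (π * ε ^ 2)) * ∫ s in (0:ℝ)..ε, F s
        ≤ (1 / (π * ε ^ 2)) * (C * (ε ^ 3 / 3)) := by
          rw [← hval]; exact mul_le_mul_of_nonneg_left hint h1.le
      _ = C / (3 * π) * ε := by field_simp
  have hlb : ∀ ε : ℝ, 0 < ε → 0 ≤ (1 / (π * ε ^ 2)) * ∫ s in (0:ℝ)..ε, F s := by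
    intro ε hε
    apply mul_nonneg (by positivity)
    apply intervalIntegral.integral_nonneg hε.le
    intro s hs; exact hFnn s hs.1
  have hupper : Tendsto (fun ε : ℝ => C / (3 * π) * ε) (nhdsWithin 0 (Set.Ioi 0)) (nhds 0) := by
    have h : Tendsto (fun ε : ℝ => C / (3 * π) * ε) (nhds 0) (nhds (C / (3 * π) * 0)) :=
      (Continuous.tendsto (by continuity) 0)
    rw [mul_zero] at h
    exact h.mono_left nhdsWithin_le_nhds
  apply tendsto_of_tendsto_of_tendsto_of_le_of_le' tendsto_const_nhds hupper
  · filter_upwards [self_mem_nhdsWithin] with ε hε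
    exact hlb ε hε
  · filter_upwards [self_mem_nhdsWithin] with ε hε
    exact hub ε hε
end

section
/- For all real μ and all σ > 0, lim_{ε→0⁺} Φ((ln ε − μ)/σ)/ε² = 0, where Φ is the standard normal CDF. -/
open MeasureTheory Real Filter

/-- The standard normal cumulative distribution function
`Φ(x) = (1/√(2π)) · ∫_{-∞}^x exp(-t²/2) dt`. -/
noncomputable def stdNormalCDF (x : ℝ) : ℝ :=
  ∫ t in Set.Iic x, (Real.sqrt (2 * π))⁻¹ * Real.exp (-t ^ 2 / 2)

/-!
Chernoff's bound: for every `c > 0`, `exp (-t²/2) ≤ exp (c²/2) · exp (c t)` because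
`(t + c)² ≥ 0`, so integrating over `(-∞, x]` gives `Φ x ≤ K_c · exp (c x)`. Substituting
`x = (log ε - μ)/σ` and `c = kσ` turns this into `Φ ((log ε - μ)/σ) ≤ C · ε ^ k` for every
`k > 0`; with `k = 3` the quotient by `ε²` is at most `C · ε`.
-/

lemma integrableOn_exp_neg_sq_div_two_Iic (x : ℝ) :
    IntegrableOn (fun t : ℝ => exp (-t ^ 2 / 2)) (Set.Iic x) := by
  have h : Integrable (fun t : ℝ => exp (-(1 / 2) * t ^ 2)) := integrable_exp_neg_mul_sq (by norm_num)
  refine (h.congr (ae_of_all _ fun t => ?_)).integrableOn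
  ring_nf

lemma stdNormalCDF_nonneg (x : ℝ) : 0 ≤ stdNormalCDF x :=
  setIntegral_nonneg measurableSet_Iic fun t _ => by positivity

lemma stdNormalCDF_le_exp_mul {c : ℝ} (hc : 0 < c) (x : ℝ) :
    stdNormalCDF x ≤ (sqrt (2 * π))⁻¹ * exp (c ^ 2 / 2) / c * exp (c * x) := by
  have hpointwise (t : ℝ) : exp (-t ^ 2 / 2) ≤ exp (c ^ 2 / 2) * exp (c * t) := by
    rw [← exp_add]
    exact exp_le_exp.2 (by nlinarith [sq_nonneg (t + c)])
  have hintegral : ∫ t in Set.Iic x, exp (-t ^ 2 / 2) ≤ exp (c ^ 2 / 2) * (exp (c * x) / c) := by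
    rw [← integral_exp_mul_Iic hc, ← integral_const_mul]
    exact setIntegral_mono_on (integrableOn_exp_neg_sq_div_two_Iic x)
      ((integrableOn_exp_mul_Iic hc x).const_mul _) measurableSet_Iic fun t _ => hpointwise t
  calc stdNormalCDF x = (sqrt (2 * π))⁻¹ * ∫ t in Set.Iic x, exp (-t ^ 2 / 2) :=
        integral_const_mul _ _
    _ ≤ (sqrt (2 * π))⁻¹ * (exp (c ^ 2 / 2) * (exp (c * x) / c)) := by gcongr
    _ = _ := by ring

lemma exists_stdNormalCDF_log_sub_div_le_rpow (μ : ℝ) {σ k : ℝ} (hσ : 0 < σ) (hk : 0 < k) :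
    ∃ C, ∀ ε > 0, stdNormalCDF ((log ε - μ) / σ) ≤ C * ε ^ k := by
  refine ⟨(sqrt (2 * π))⁻¹ * exp ((k * σ) ^ 2 / 2) / (k * σ) * exp (-(k * μ)), fun ε hε => ?_⟩
  have hexp : exp (k * σ * ((log ε - μ) / σ)) = exp (-(k * μ)) * ε ^ k := by
    rw [rpow_def_of_pos hε, ← exp_add]
    congr 1
    field_simp
    ring
  calc stdNormalCDF ((log ε - μ) / σ)
      ≤ (sqrt (2 * π))⁻¹ * exp ((k * σ) ^ 2 / 2) / (k * σ) * exp (k * σ * ((log ε - μ) / σ)) :=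
        stdNormalCDF_le_exp_mul (by positivity) _
    _ = _ := by rw [hexp]; ring

/-- `lim_{ε→0⁺} Φ((ln ε − μ)/σ)/ε² = 0`, where `Φ` is the standard normal CDF. -/
theorem stdNormalCDF_log_div_sq_tendsto_zero (μ σ : ℝ) (hσ : 0 < σ) :
    Tendsto (fun ε : ℝ => stdNormalCDF ((Real.log ε - μ) / σ) / ε ^ 2)
      (nhdsWithin 0 (Set.Ioi 0)) (nhds 0) := by
  obtain ⟨C, hC⟩ := exists_stdNormalCDF_log_sub_div_le_rpow μ hσ (k := 3) (by norm_num)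
  have hlower : ∀ ε ∈ Set.Ioi (0 : ℝ), 0 ≤ stdNormalCDF ((log ε - μ) / σ) / ε ^ 2 :=
    fun ε _ => div_nonneg (stdNormalCDF_nonneg _) (sq_nonneg ε)
  have hupper : ∀ ε ∈ Set.Ioi (0 : ℝ), stdNormalCDF ((log ε - μ) / σ) / ε ^ 2 ≤ C * ε := by
    intro ε (hε : 0 < ε)
    rw [div_le_iff₀ (by positivity)]
    calc stdNormalCDF ((log ε - μ) / σ) ≤ C * ε ^ (3 : ℝ) := hC ε hε
      _ = C * ε * ε ^ 2 := by norm_cast; ring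
  have hCε : Tendsto (fun ε : ℝ => C * ε) (nhdsWithin 0 (Set.Ioi 0)) (nhds 0) := by
    simpa using ((continuous_const_mul C).tendsto 0).mono_left nhdsWithin_le_nhds
  exact tendsto_of_tendsto_of_tendsto_of_le_of_le' tendsto_const_nhds hCε
    (eventually_nhdsWithin_of_forall hlower) (eventually_nhdsWithin_of_forall hupper)
end

section
/- For all v, x ∈ ℝ², the total damage density of the traveling storm satisfies (1/(2π)^{3/2})·∫_{−∞}^{∞} exp(−½·(t² + ‖x − t·v‖²)) dt = exp(−½·(‖x‖² − ⟨v, x⟩²/(1 + ‖v‖²)))/(2π·√(1 + ‖v‖²)). -/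
open MeasureTheory Real
open scoped RealInnerProductSpace

/-- The total damage density of the traveling storm:
`(1/(2π)^{3/2}) ∫_{−∞}^{∞} exp(−½(t² + ‖x − t v‖²)) dt
  = exp(−½(‖x‖² − ⟨v,x⟩²/(1+‖v‖²)))/(2π √(1+‖v‖²))`. -/
theorem total_damage_density (v x : EuclideanSpace ℝ (Fin 2)) :
    (1 / (2 * π) ^ ((3 : ℝ) / 2)) *
        ∫ t : ℝ, Real.exp (-(1 / 2) * (t ^ 2 + ‖x - t • v‖ ^ 2))
      = Real.exp (-(1 / 2) * (‖x‖ ^ 2 - ⟪v, x⟫ ^ 2 / (1 + ‖v‖ ^ 2)))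
          / (2 * π * Real.sqrt (1 + ‖v‖ ^ 2)) := by
  have hπ : (0:ℝ) < π := Real.pi_pos
  set a : ℝ := 1 + ‖v‖ ^ 2 with ha_def
  have ha : (0:ℝ) < a := by positivity
  set m : ℝ := ⟪v, x⟫ / a with hm_def
  set C : ℝ := Real.exp (-(1/2) * (‖x‖ ^ 2 - ⟪v, x⟫ ^ 2 / a)) with hC_def
  have hpt : ∀ t : ℝ, Real.exp (-(1 / 2) * (t ^ 2 + ‖x - t • v‖ ^ 2))
      = C * Real.exp (-(a/2) * (t - m) ^ 2) := by
    intro t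
    rw [hC_def, ← Real.exp_add]
    congr 1
    have h1 : ‖x - t • v‖ ^ 2 = ‖x‖ ^ 2 - 2 * (t * ⟪v, x⟫) + t ^ 2 * ‖v‖ ^ 2 := by
      rw [norm_sub_sq_real, real_inner_smul_right, norm_smul, real_inner_comm]
      simp [mul_pow, sq_abs]
    rw [h1, hm_def]
    field_simp
    ring
  simp only [hpt]
  rw [MeasureTheory.integral_const_mul]
  have hshift : (∫ t : ℝ, Real.exp (-(a/2) * (t - m) ^ 2))
      = ∫ t : ℝ, Real.exp (-(a/2) * t ^ 2) :=
    integral_sub_right_eq_self (fun t => Real.exp (-(a/2) * t ^ 2)) m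
  rw [hshift, integral_gaussian]
  have h2 : π / (a/2) = 2 * π / a := by
    field_simp
  have h3 : Real.sqrt (2 * π / a) = Real.sqrt (2 * π) / Real.sqrt a :=
    Real.sqrt_div (by positivity) a
  have h4 : (2 * π) ^ ((3:ℝ)/2) = (2 * π) * Real.sqrt (2 * π) := by
    rw [show (3:ℝ)/2 = 1 + 1/2 by norm_num, Real.rpow_add (by positivity),
      Real.rpow_one, ← Real.sqrt_eq_rpow]
  rw [h2, h3, h4]
  have h5 : Real.sqrt (2 * π) ≠ 0 := by positivity
  have h6 : Real.sqrt a ≠ 0 := by positivity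
  field_simp
end
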